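/- arXiv:1410.6731 — 3 statements merged into one kernel-verified Lean document; each statement's English description precedes it below -/
import Mathlib

section
/- Suppose X has independent increments, i.e. for all 0 < s < t the increment X_t − X_s is independent of 𝔉_{≤s}. Put g_0 ≡ 1 and g_n(t) = E[X_t^n] for n ≥ 1, and define random variables M_n(t) recursively by M_0(t) = 1 and M_n(t) = X_t^n − g_n(t) − Σ_{j=1}^{n−1} C(n,j)·g_j(t)·M_{n−j}(t) for n ≥ 1. Then each process (M_n(t))_{t>0} is a martingale with respect to the filtration (𝔉_{≤t}): for all n ≥ 0 and s < t, E[M_n(t) | 𝔉_{≤s}] = M_n(s) almost surely. -/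
open MeasureTheory ProbabilityTheory Polynomial Filter Finset

noncomputable section

variable {Ω : Type*}

/-- The σ-algebra of the past: `𝔉_{≤ s} = σ(X_u : 0 < u ≤ s)`. -/
def sigmaLE [MeasurableSpace Ω] (X : ℝ → Ω → ℝ) (s : ℝ) : MeasurableSpace Ω :=
  ⨆ u ∈ Set.Ioc (0 : ℝ) s, MeasurableSpace.comap (X u) inferInstance

/-- The σ-algebra of the future: `𝔉_{≥ s} = σ(X_u : u ≥ s)`. -/
def sigmaGE [MeasurableSpace Ω] (X : ℝ → Ω → ℝ) (s : ℝ) : MeasurableSpace Ω :=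
  ⨆ u ∈ Set.Ici s, MeasurableSpace.comap (X u) inferInstance

/-- The σ-algebra `𝔉_{s,u} = σ(𝔉_{≤ s} ∪ 𝔉_{≥ u})`. -/
def sigmaIntv [MeasurableSpace Ω] (X : ℝ → Ω → ℝ) (s u : ℝ) : MeasurableSpace Ω :=
  sigmaLE X s ⊔ sigmaGE X u

/-- A family of polynomial martingales for the process `X`:
`M n (·,t)` is a polynomial of degree exactly `n` with coefficients continuous in `t`,
`M 0 ≡ 1`, `E[M_n(X_t,t)] = 0` for `n ≥ 1`, and each `M_n(X_t,t)` is a martingale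
with respect to the natural filtration of `X`. -/
structure IsPolyMartFamily [MeasurableSpace Ω] (μ : Measure Ω) (X : ℝ → Ω → ℝ)
    (M : ℕ → ℝ → Polynomial ℝ) : Prop where
  meas : ∀ t : ℝ, 0 < t → Measurable (X t)
  moments : ∀ (n : ℕ) (t : ℝ), 0 < t → Integrable (fun ω => X t ω ^ n) μ
  degree_eq : ∀ (n : ℕ) (t : ℝ), 0 < t → (M n t).degree = n
  coeff_cont : ∀ n k : ℕ, ContinuousOn (fun t => (M n t).coeff k) (Set.Ioi 0)
  zeroth : ∀ t : ℝ, 0 < t → M 0 t = 1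
  mean_zero : ∀ n : ℕ, 1 ≤ n → ∀ t : ℝ, 0 < t → ∫ ω, (M n t).eval (X t ω) ∂μ = 0
  mart : ∀ (n : ℕ) (s t : ℝ), 0 < s → s < t →
    μ[fun ω => (M n t).eval (X t ω) | sigmaLE X s]
      =ᵐ[μ] fun ω => (M n s).eval (X s ω)

/-- `m_n(t) = E[M_n(X_t,t)²]`. -/
def mFun [MeasurableSpace Ω] (μ : Measure Ω) (X : ℝ → Ω → ℝ)
    (M : ℕ → ℝ → Polynomial ℝ) (n : ℕ) (t : ℝ) : ℝ :=
  ∫ ω, ((M n t).eval (X t ω)) ^ 2 ∂μ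

/-- Standing regularity assumptions on the functions `m_n`: each `m_n` is continuous,
nondecreasing and strictly positive on `(0,∞)` and `m_n(s) → 0` as `s → 0+`. -/
structure MRegular [MeasurableSpace Ω] (μ : Measure Ω) (X : ℝ → Ω → ℝ)
    (M : ℕ → ℝ → Polynomial ℝ) : Prop where
  cont : ∀ n : ℕ, ContinuousOn (mFun μ X M n) (Set.Ioi 0)
  mono : ∀ n : ℕ, MonotoneOn (mFun μ X M n) (Set.Ioi 0)
  pos : ∀ (n : ℕ) (t : ℝ), 0 < t → 0 < mFun μ X M n t
  tendsto_zero : ∀ n : ℕ, Tendsto (mFun μ X M n) (nhdsWithin 0 (Set.Ioi 0)) (nhds 0)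

/-- A Markov process with polynomial regression (MPR): `X` is Markov, the moment
generating function of each `X_t` exists in a neighbourhood of `0`, and every
conditional moment `E[X_t^n | 𝔉_{≤ s}]` is a polynomial of degree `n` in `X_s`. -/
structure IsMPR [MeasurableSpace Ω] (μ : Measure Ω) (X : ℝ → Ω → ℝ) : Prop where
  meas : ∀ t : ℝ, 0 < t → Measurable (X t)
  moments : ∀ (n : ℕ) (t : ℝ), 0 < t → Integrable (fun ω => X t ω ^ n) μ
  markov : ∀ (s t : ℝ), 0 < s → s < t → ∀ f : ℝ → ℝ, Measurable f →
    Integrable (fun ω => f (X t ω)) μ →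
    μ[fun ω => f (X t ω) | sigmaLE X s]
      =ᵐ[μ] μ[fun ω => f (X t ω) | MeasurableSpace.comap (X s) inferInstance]
  mgf : ∀ t : ℝ, 0 < t → ∃ α : ℝ, 0 < α ∧
    Integrable (fun ω => Real.exp (α * |X t ω|)) μ
  polyReg : ∀ (n : ℕ) (s t : ℝ), 0 < s → s < t → ∃ p : Polynomial ℝ,
    p.degree = n ∧
      μ[fun ω => X t ω ^ n | sigmaLE X s] =ᵐ[μ] fun ω => p.eval (X s ω)

/-- `X` has independent increments: for all `0 < s < t` the increment `X_t - X_s`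
is independent of `𝔉_{≤ s}`. -/
def HasIndepIncrements [MeasurableSpace Ω] (μ : Measure Ω) (X : ℝ → Ω → ℝ) : Prop :=
  ∀ s t : ℝ, 0 < s → s < t →
    Indep (MeasurableSpace.comap (fun ω => X t ω - X s ω) inferInstance) (sigmaLE X s) μ

/-! Write `a ⋆ b` for the binomial convolution `(a ⋆ b)ₙ = ∑ⱼ C(n,j) aⱼ bₙ₋ⱼ`, the product of
exponential generating functions. The recurrence says exactly `X_t^· = g(t) ⋆ M(t)`. The increment
`D = X_t - X_s` is independent of `𝔉_{≤s}`, so with `hₖ = E[Dᵏ]` the binomial theorem gives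
`E[X_t^· | 𝔉_{≤s}] = X_s^· ⋆ h` and, taking expectations, `g(t) = g(s) ⋆ h`. Hence
`g(t) ⋆ E[M(t) | 𝔉_{≤s}] = X_s^· ⋆ h = g(s) ⋆ M(s) ⋆ h = g(t) ⋆ M(s)`,
and convolution with `g(t)` can be cancelled because `g₀(t) = 1`. -/

open scoped Nat

section BinomialConv

variable {R : Type*}

def binomialConv [CommSemiring R] (a b : ℕ → R) (n : ℕ) : R :=
  ∑ j ∈ range (n + 1), n.choose j * a j * b (n - j)

lemma binomialConv_eq_add_sum [CommSemiring R] (a b : ℕ → R) (n : ℕ) :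
    binomialConv a b n = a 0 * b n + ∑ j ∈ Icc 1 n, n.choose j * a j * b (n - j) := by
  rw [binomialConv, range_eq_Ico, sum_eq_sum_Ico_succ_bot n.succ_pos, zero_add,
    Nat.succ_eq_add_one, Ico_add_one_right_eq_Icc]
  simp

lemma binomialConv_eq_of_recurrence [CommRing R] {x g m : ℕ → R} (hx0 : x 0 = 1) (hg0 : g 0 = 1)
    (hm0 : m 0 = 1) (hrec : ∀ n, 1 ≤ n → m n =
      x n - g n - ∑ j ∈ Icc 1 (n - 1), n.choose j * g j * m (n - j)) :
    binomialConv g m = x := by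
  funext n
  rcases Nat.eq_zero_or_pos n with rfl | hn
  · simp [binomialConv, hx0, hg0, hm0]
  · rw [binomialConv_eq_add_sum, hrec n hn,
      ← insert_Icc_sub_one_right_eq_Icc (a := 1) (b := n) hn, sum_insert (by simp; omega), hg0,
      Nat.choose_self, Nat.sub_self, hm0]
    ring

end BinomialConv

section EGF

variable {K : Type*} [Field K]

def egf (a : ℕ → K) : PowerSeries K := PowerSeries.mk fun n => a n / n !

lemma egf_ne_zero {a : ℕ → K} (ha : a 0 ≠ 0) : egf a ≠ 0 := fun h =>
  ha <| by simpa [egf] using congrArg (PowerSeries.coeff 0) h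

variable [CharZero K]

lemma egf_injective : Function.Injective (egf (K := K)) := fun a b h => funext fun n => by
  simpa [egf, Nat.factorial_ne_zero] using congrArg (PowerSeries.coeff n) h

lemma egf_binomialConv (a b : ℕ → K) : egf (binomialConv a b) = egf a * egf b := by
  ext n
  rw [PowerSeries.coeff_mul, Nat.sum_antidiagonal_eq_sum_range_succ_mk]
  simp only [egf, PowerSeries.coeff_mk, binomialConv, sum_div]
  refine sum_congr rfl fun j hj => ?_
  have hjn : j ≤ n := mem_range_succ_iff.mp hj
  have hc : (n.choose j : K) ≠ 0 := by exact_mod_cast (Nat.choose_pos hjn).ne'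
  rw [← Nat.choose_mul_factorial_mul_factorial hjn]
  push_cast
  field_simp

lemma binomialConv_right_comm (a b c : ℕ → K) :
    binomialConv (binomialConv a b) c = binomialConv (binomialConv a c) b :=
  egf_injective (by simp only [egf_binomialConv]; ring)

lemma binomialConv_left_cancel {a b c : ℕ → K} (ha : a 0 ≠ 0)
    (h : binomialConv a b = binomialConv a c) : b = c :=
  egf_injective <| mul_left_cancel₀ (egf_ne_zero ha) <| by
    simpa only [egf_binomialConv] using congrArg egf h

end EGF

section Moments

variable {mΩ : MeasurableSpace Ω} {μ : Measure Ω}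

def HasFiniteMoments (μ : Measure Ω) (f : Ω → ℝ) : Prop :=
  ∀ n : ℕ, Integrable (fun ω => f ω ^ n) μ

namespace HasFiniteMoments

variable {f g : Ω → ℝ}

lemma memLp_two_pow (hf : HasFiniteMoments μ f) (i : ℕ) : MemLp (fun ω => f ω ^ i) 2 μ :=
  (memLp_two_iff_integrable_sq (hf i).aestronglyMeasurable).2 <| by
    simpa only [← pow_mul] using hf (i * 2)

lemma integrable_pow_mul_pow (hf : HasFiniteMoments μ f) (hg : HasFiniteMoments μ g)
    (i j : ℕ) : Integrable (fun ω => f ω ^ i * g ω ^ j) μ :=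
  (hf.memLp_two_pow i).integrable_mul (hg.memLp_two_pow j)

lemma add (hf : HasFiniteMoments μ f) (hg : HasFiniteMoments μ g) :
    HasFiniteMoments μ (f + g) := fun n => by
  simp only [Pi.add_apply, add_pow]
  exact integrable_finsetSum _ fun j _ => (hf.integrable_pow_mul_pow hg j (n - j)).mul_const _

lemma neg (hf : HasFiniteMoments μ f) : HasFiniteMoments μ (-f) := fun n =>
  ((hf n).const_mul ((-1) ^ n)).congr (ae_of_all _ fun ω => (neg_pow (f ω) n).symm)

lemma sub (hf : HasFiniteMoments μ f) (hg : HasFiniteMoments μ g) :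
    HasFiniteMoments μ (f - g) := by
  simpa only [sub_eq_add_neg] using hf.add hg.neg

end HasFiniteMoments

lemma condExp_mul_eq_of_indep [IsFiniteMeasure μ] {m m' : MeasurableSpace Ω} (hm : m ≤ mΩ)
    (hm' : m' ≤ mΩ) {f g : Ω → ℝ} (hf : StronglyMeasurable[m] f) (hg : StronglyMeasurable[m'] g)
    (hind : Indep m' m μ) (hfg : Integrable (f * g) μ) (hgi : Integrable g μ) :
    μ[f * g | m] =ᵐ[μ] fun ω => f ω * ∫ x, g x ∂μ := by
  filter_upwards [condExp_mul_of_stronglyMeasurable_left hf hfg hgi,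
    condExp_indep_eq hm' hm hg hind] with ω h1 h2
  rw [h1, Pi.mul_apply, h2]

lemma condExp_add_pow_of_indep [IsFiniteMeasure μ] {m : MeasurableSpace Ω} (hm : m ≤ mΩ)
    {f d : Ω → ℝ} (hf : Measurable[m] f) (hd : Measurable[mΩ] d)
    (hind : Indep (MeasurableSpace.comap d inferInstance) m μ)
    (hfmom : HasFiniteMoments μ f) (hdmom : HasFiniteMoments μ d) (n : ℕ) :
    μ[fun ω => (f ω + d ω) ^ n | m]
      =ᵐ[μ] fun ω => binomialConv (f ω ^ ·) (fun k => ∫ x, d x ^ k ∂μ) n := by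
  have hexp : (fun ω => (f ω + d ω) ^ n)
      = ∑ j ∈ range (n + 1), (n.choose j : ℝ) • fun ω => f ω ^ j * d ω ^ (n - j) := by
    funext ω
    simp only [add_pow, Finset.sum_apply, Pi.smul_apply, smul_eq_mul]
    exact sum_congr rfl fun j _ => by ring
  have hterm : ∀ j, μ[fun ω => f ω ^ j * d ω ^ (n - j) | m]
      =ᵐ[μ] fun ω => f ω ^ j * ∫ x, d x ^ (n - j) ∂μ := fun j =>
    condExp_mul_eq_of_indep hm hd.comap_le (hf.pow_const j).stronglyMeasurable
      ((comap_measurable d).pow_const _).stronglyMeasurable hind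
      (hfmom.integrable_pow_mul_pow hdmom j (n - j)) (hdmom _)
  rw [hexp]
  refine (condExp_finsetSum (fun j _ =>
    (hfmom.integrable_pow_mul_pow hdmom j (n - j)).smul _) m).trans ?_
  filter_upwards [ae_all_iff.2 fun j => condExp_smul (n.choose j : ℝ)
    (fun ω => f ω ^ j * d ω ^ (n - j)) m, ae_all_iff.2 hterm] with ω hsmul hprod
  simp only [Finset.sum_apply, hsmul, Pi.smul_apply, hprod, smul_eq_mul, binomialConv]
  exact sum_congr rfl fun j _ => by ring

lemma integral_add_pow_of_indep [IsFiniteMeasure μ] {m : MeasurableSpace Ω} (hm : m ≤ mΩ)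
    {f d : Ω → ℝ} (hf : Measurable[m] f) (hd : Measurable[mΩ] d)
    (hind : Indep (MeasurableSpace.comap d inferInstance) m μ)
    (hfmom : HasFiniteMoments μ f) (hdmom : HasFiniteMoments μ d) (n : ℕ) :
    ∫ ω, (f ω + d ω) ^ n ∂μ
      = binomialConv (fun k => ∫ ω, f ω ^ k ∂μ) (fun k => ∫ x, d x ^ k ∂μ) n := by
  rw [← integral_condExp hm,
    integral_congr_ae (condExp_add_pow_of_indep hm hf hd hind hfmom hdmom n)]
  simp only [binomialConv]
  rw [integral_finsetSum _ fun j _ => ((hfmom j).const_mul _).mul_const _]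
  simp only [integral_mul_const, integral_const_mul]

lemma condExp_binomialConv_const_left {m : MeasurableSpace Ω} (a : ℕ → ℝ)
    {Y : ℕ → Ω → ℝ} (hY : ∀ j, Integrable (Y j) μ) (n : ℕ) :
    μ[fun ω => binomialConv a (Y · ω) n | m]
      =ᵐ[μ] fun ω => binomialConv a (fun j => μ[Y j | m] ω) n := by
  have hexp : (fun ω => binomialConv a (Y · ω) n)
      = ∑ j ∈ range (n + 1), (n.choose j * a j) • Y (n - j) := by
    funext ω
    simp [binomialConv, Finset.sum_apply]
  rw [hexp]
  refine (condExp_finsetSum (fun j _ => (hY _).smul _) m).trans ?_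
  filter_upwards [ae_all_iff.2 fun j => condExp_smul (n.choose j * a j) (Y (n - j)) m]
    with ω hsmul
  simp [binomialConv, Finset.sum_apply, hsmul]

lemma integrable_of_forall_integrable_binomialConv {a : ℕ → ℝ} {Y : ℕ → Ω → ℝ} (ha : a 0 = 1)
    (h : ∀ n, Integrable (fun ω => binomialConv a (Y · ω) n) μ) (n : ℕ) : Integrable (Y n) μ := by
  induction n using Nat.strong_induction_on with
  | _ n ih =>
  have hsum : Integrable (fun ω => ∑ j ∈ Icc 1 n, n.choose j * a j * Y (n - j) ω) μ :=
    integrable_finsetSum _ fun j hj => (ih (n - j) (by grind)).const_mul _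
  refine ((h n).sub hsum).congr (ae_of_all _ fun ω => ?_)
  simp [binomialConv_eq_add_sum, ha]

lemma sigmaLE_le {X : ℝ → Ω → ℝ} {s : ℝ} (hX : ∀ u ∈ Set.Ioc 0 s, Measurable (X u)) :
    sigmaLE X s ≤ mΩ :=
  iSup₂_le fun u hu => (hX u hu).comap_le

lemma measurable_sigmaLE {X : ℝ → Ω → ℝ} {s : ℝ} (hs : 0 < s) : Measurable[sigmaLE X s] (X s) :=
  Measurable.of_comap_le <| le_iSup₂ (f := fun u (_ : u ∈ Set.Ioc 0 s) =>
    MeasurableSpace.comap (X u) inferInstance) s ⟨hs, le_rfl⟩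

end Moments

/-- If `X` has independent increments then the random variables defined
by the recurrence `M_n(t) = X_t^n - g_n(t) - ∑_{j=1}^{n-1} C(n,j) g_j(t) M_{n-j}(t)`,
with `g_n(t) = E[X_t^n]`, are martingales with respect to the natural filtration. -/
theorem recurrence_gives_martingales
    [MeasurableSpace Ω] (μ : Measure Ω) [IsProbabilityMeasure μ]
    (X : ℝ → Ω → ℝ)
    (hmeas : ∀ t : ℝ, 0 < t → Measurable (X t))
    (hmom : ∀ (n : ℕ) (t : ℝ), 0 < t → Integrable (fun ω => X t ω ^ n) μ)
    (hind : HasIndepIncrements μ X)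
    (M : ℕ → ℝ → Ω → ℝ)
    (hM0 : ∀ t : ℝ, 0 < t → M 0 t = fun _ => (1 : ℝ))
    (hMrec : ∀ n : ℕ, 1 ≤ n → ∀ t : ℝ, 0 < t → M n t = fun ω =>
      X t ω ^ n - (∫ ω', X t ω' ^ n ∂μ)
        - ∑ j ∈ Finset.Icc 1 (n - 1),
            (n.choose j : ℝ) * (∫ ω', X t ω' ^ j ∂μ) * M (n - j) t ω) :
    ∀ (n : ℕ) (s t : ℝ), 0 < s → s < t →
      μ[M n t | sigmaLE X s] =ᵐ[μ] M n s := by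
  intro n s t hs hst
  have ht : 0 < t := hs.trans hst
  set g : ℝ → ℕ → ℝ := fun r k => ∫ ω, X r ω ^ k ∂μ
  have hF : sigmaLE X s ≤ ‹MeasurableSpace Ω› := sigmaLE_le fun u hu => hmeas u hu.1
  have hXs : Measurable[sigmaLE X s] (X s) := measurable_sigmaLE hs
  have hD := (hmeas t ht).sub (hmeas s hs)
  have hmomXs : HasFiniteMoments μ (X s) := (hmom · s hs)
  have hmomD : HasFiniteMoments μ (X t - X s) := HasFiniteMoments.sub (hmom · t ht) hmomXs
  have hpow : ∀ r, 0 < r → ∀ ω, binomialConv (g r) (M · r ω) = (X r ω ^ ·) := fun r hr ω =>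
    binomialConv_eq_of_recurrence (pow_zero _) (by simp [g]) (by simp [hM0 r hr])
      fun n hn => by simp [hMrec n hn r hr, g]
  have hMint : ∀ j, Integrable (M j t) μ :=
    integrable_of_forall_integrable_binomialConv (a := g t) (by simp [g]) fun n => by
      simpa [hpow t ht] using hmom n t ht
  have hgt : g t = binomialConv (g s) (fun k => ∫ ω, (X t ω - X s ω) ^ k ∂μ) :=
    funext fun n => by
      simpa [g] using integral_add_pow_of_indep hF hXs hD (hind s t hs hst) hmomXs hmomD n
  have hcond : ∀ᵐ ω ∂μ, ∀ n, binomialConv (g t) (μ[M · t | sigmaLE X s] ω) n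
      = binomialConv (X s ω ^ ·) (fun k => ∫ ω, (X t ω - X s ω) ^ k ∂μ) n := by
    refine ae_all_iff.2 fun n => ?_
    have hXt := condExp_add_pow_of_indep hF hXs hD (hind s t hs hst) hmomXs hmomD n
    simp only [Pi.sub_apply, add_sub_cancel] at hXt
    have hMt := condExp_binomialConv_const_left (m := sigmaLE X s) (g t) hMint n
    simp only [hpow t ht] at hMt
    filter_upwards [hMt, hXt] with ω h1 h2
    rw [← h1, h2]
  filter_upwards [hcond] with ω hω
  refine congrFun (binomialConv_left_cancel (a := g t) (b := (μ[M · t | sigmaLE X s] ω))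
    (c := (M · s ω)) (by simp [g]) ?_) n
  rw [funext hω, ← hpow s hs ω, binomialConv_right_comm, ← hgt]
end
end

section
/- Suppose X is a harness, i.e. for all 0 < s < t < u, E[M_1(t) | 𝔉_{s,u}] = a(s,t,u)·M_1(s) + b(s,t,u)·M_1(u) almost surely for some real numbers a(s,t,u), b(s,t,u), and suppose m_1 is strictly increasing and positive. Then necessarily a(s,t,u) = (m_1(u) − m_1(t))/(m_1(u) − m_1(s)) and b(s,t,u) = (m_1(t) − m_1(s))/(m_1(u) − m_1(s)); in particular a(s,t,u) + b(s,t,u) = 1. -/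
open MeasureTheory ProbabilityTheory Polynomial Filter Finset

noncomputable section

variable {Ω : Type*}

section Aux
variable [MeasurableSpace Ω] {μ : Measure Ω}

lemma integrable_polyEval (p : Polynomial ℝ) {Y : Ω → ℝ} (hY : Measurable Y)
    (hm : ∀ n : ℕ, Integrable (fun ω => Y ω ^ n) μ) :
    Integrable (fun ω => p.eval (Y ω)) μ := by
  have h : (fun ω => p.eval (Y ω))
      = fun ω => ∑ i ∈ Finset.range (p.natDegree + 1), p.coeff i * Y ω ^ i := by
    funext ω; rw [Polynomial.eval_eq_sum_range]
  rw [h]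
  exact integrable_finset_sum _ (fun i _ => (hm i).const_mul _)

lemma integrable_sq_polyEval (p : Polynomial ℝ) {Y : Ω → ℝ} (hY : Measurable Y)
    (hm : ∀ n : ℕ, Integrable (fun ω => Y ω ^ n) μ) :
    Integrable (fun ω => p.eval (Y ω) ^ 2) μ := by
  have h : (fun ω => p.eval (Y ω) ^ 2) = fun ω => (p ^ 2).eval (Y ω) := by
    funext ω; simp
  rw [h]
  exact integrable_polyEval _ hY hm

lemma integrable_mul_of_sq {f g : Ω → ℝ}
    (hf : AEStronglyMeasurable f μ) (hg : AEStronglyMeasurable g μ)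
    (hf2 : Integrable (fun ω => f ω ^ 2) μ) (hg2 : Integrable (fun ω => g ω ^ 2) μ) :
    Integrable (f * g) μ := by
  refine Integrable.mono' (((hf2.add hg2).div_const 2)) (hf.mul hg) ?_
  filter_upwards with ω
  have h2 : 2 * |f ω| * |g ω| ≤ |f ω| ^ 2 + |g ω| ^ 2 := two_mul_le_add_sq _ _
  simp only [Pi.mul_apply, Pi.add_apply, Real.norm_eq_abs, abs_mul]
  rw [sq_abs, sq_abs] at h2
  linarith

/-- Key pull-out identity: `∫ f g = ∫ f ⬝ E[g|m]` when `f` is `m`-measurable. -/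
lemma integral_mul_eq_integral_mul_condexp {m m0 : MeasurableSpace Ω} {μ : Measure Ω}
    [IsFiniteMeasure μ] (hm : m ≤ m0) {f g : Ω → ℝ}
    (hf : StronglyMeasurable[m] f) (hfg : Integrable (f * g) μ) (hg : Integrable g μ) :
    ∫ ω, f ω * g ω ∂μ = ∫ ω, f ω * (μ[g|m]) ω ∂μ := by
  have h1 : ∫ ω, (f * g) ω ∂μ = ∫ ω, (μ[f * g|m]) ω ∂μ := (integral_condExp hm).symm
  have h2 : ∫ ω, (μ[f * g|m]) ω ∂μ = ∫ ω, (f * μ[g|m]) ω ∂μ :=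
    integral_congr_ae (condExp_mul_of_stronglyMeasurable_left hf hfg hg)
  simpa using h1.trans h2

end Aux

/-- If `X` is a harness with coefficients `a(s,t,u)`, `b(s,t,u)` and `m_1`
is strictly increasing and positive, then necessarily
`a = (m_1(u)-m_1(t))/(m_1(u)-m_1(s))`, `b = (m_1(t)-m_1(s))/(m_1(u)-m_1(s))`,
so in particular `a + b = 1`. -/
theorem harness_coefficients
    [MeasurableSpace Ω] (μ : Measure Ω) [IsProbabilityMeasure μ]
    (X : ℝ → Ω → ℝ) (M : ℕ → ℝ → Polynomial ℝ)
    (hM : IsPolyMartFamily μ X M)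
    (hmono : StrictMonoOn (mFun μ X M 1) (Set.Ioi 0))
    (hpos : ∀ s : ℝ, 0 < s → 0 < mFun μ X M 1 s)
    (s t u : ℝ) (hs : 0 < s) (hst : s < t) (htu : t < u) (a b : ℝ)
    (hhar : μ[fun ω => (M 1 t).eval (X t ω) | sigmaIntv X s u]
      =ᵐ[μ] fun ω => a * (M 1 s).eval (X s ω) + b * (M 1 u).eval (X u ω)) :
    a = (mFun μ X M 1 u - mFun μ X M 1 t) / (mFun μ X M 1 u - mFun μ X M 1 s) ∧
    b = (mFun μ X M 1 t - mFun μ X M 1 s) / (mFun μ X M 1 u - mFun μ X M 1 s) ∧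
    a + b = 1 := by
  have ht : 0 < t := hs.trans hst
  have hu : 0 < u := ht.trans htu
  set fs : Ω → ℝ := fun ω => (M 1 s).eval (X s ω) with hfs
  set ft : Ω → ℝ := fun ω => (M 1 t).eval (X t ω) with hft
  set fu : Ω → ℝ := fun ω => (M 1 u).eval (X u ω) with hfu
  have hint : ∀ v, 0 < v → Integrable (fun ω => (M 1 v).eval (X v ω)) μ := fun v hv =>
    integrable_polyEval _ (hM.meas v hv) (fun n => hM.moments n v hv)
  have hsq : ∀ v, 0 < v → Integrable (fun ω => (M 1 v).eval (X v ω) ^ 2) μ := fun v hv =>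
    integrable_sq_polyEval _ (hM.meas v hv) (fun n => hM.moments n v hv)
  have haesm : ∀ v, 0 < v → AEStronglyMeasurable (fun ω => (M 1 v).eval (X v ω)) μ :=
    fun v hv => (((M 1 v).continuous).measurable.comp (hM.meas v hv)).aestronglyMeasurable
  have hmul : ∀ v w, 0 < v → 0 < w →
      Integrable ((fun ω => (M 1 v).eval (X v ω)) * (fun ω => (M 1 w).eval (X w ω))) μ :=
    fun v w hv hw => integrable_mul_of_sq (haesm v hv) (haesm w hw) (hsq v hv) (hsq w hw)
  have hle_le : ∀ v, 0 < v → sigmaLE X v ≤ ‹MeasurableSpace Ω› := fun v hv =>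
    iSup₂_le fun w hw => measurable_iff_comap_le.mp (hM.meas w hw.1)
  have hge_le : sigmaGE X u ≤ ‹MeasurableSpace Ω› :=
    iSup₂_le fun w hw => measurable_iff_comap_le.mp (hM.meas w (hu.trans_le hw))
  have hintv_le : sigmaIntv X s u ≤ ‹MeasurableSpace Ω› := sup_le (hle_le s hs) hge_le
  have hXmeasLE : ∀ v, 0 < v → Measurable[sigmaLE X v] (X v) := by
    intro v hv
    have h1 : Measurable[MeasurableSpace.comap (X v) inferInstance] (X v) :=
      measurable_iff_comap_le.mpr le_rfl
    exact h1.mono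
      (le_iSup₂ (f := fun (w : ℝ) (_ : w ∈ Set.Ioc (0:ℝ) v) =>
        MeasurableSpace.comap (X w) inferInstance) v ⟨hv, le_rfl⟩) le_rfl
  have hmeasLE : ∀ v, 0 < v → StronglyMeasurable[sigmaLE X v]
      (fun ω => (M 1 v).eval (X v ω)) := fun v hv =>
    (((M 1 v).continuous).measurable.comp (hXmeasLE v hv)).stronglyMeasurable
  have hmeasIntv_s : StronglyMeasurable[sigmaIntv X s u] fs :=
    (hmeasLE s hs).mono le_sup_left
  have hXu_ge : Measurable[sigmaGE X u] (X u) := by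
    have h1 : Measurable[MeasurableSpace.comap (X u) inferInstance] (X u) :=
      measurable_iff_comap_le.mpr le_rfl
    exact h1.mono
      (le_iSup₂ (f := fun (w : ℝ) (_ : w ∈ Set.Ici u) =>
        MeasurableSpace.comap (X w) inferInstance) u Set.self_mem_Ici) le_rfl
  have hmeasIntv_u : StronglyMeasurable[sigmaIntv X s u] fu :=
    ((((M 1 u).continuous).measurable.comp hXu_ge).stronglyMeasurable).mono le_sup_right
  -- E[f_v f_w] = m_1(v) for v < w
  have key : ∀ v w, 0 < v → v < w →
      ∫ ω, (M 1 v).eval (X v ω) * (M 1 w).eval (X w ω) ∂μ = mFun μ X M 1 v := by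
    intro v w hv hvw
    have hw : 0 < w := hv.trans hvw
    have h := integral_mul_eq_integral_mul_condexp (hle_le v hv) (hmeasLE v hv)
      (hmul v w hv hw) (hint w hw)
    rw [h, integral_congr_ae (g := fun ω => (M 1 v).eval (X v ω) ^ 2)]
    · rfl
    · filter_upwards [hM.mart 1 v w hv hvw] with ω hω
      rw [hω]; ring
  -- harness identities
  have harness : ∀ g : Ω → ℝ, StronglyMeasurable[sigmaIntv X s u] g →
      AEStronglyMeasurable g μ → Integrable (fun ω => g ω ^ 2) μ →
      ∫ ω, g ω * ft ω ∂μ = a * ∫ ω, g ω * fs ω ∂μ + b * ∫ ω, g ω * fu ω ∂μ := by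
    intro g hgm hgae hg2
    have hgt : Integrable (g * ft) μ := integrable_mul_of_sq hgae (haesm t ht) hg2 (hsq t ht)
    have h := integral_mul_eq_integral_mul_condexp hintv_le hgm hgt (hint t ht)
    have h2 : ∫ ω, g ω * (μ[ft|sigmaIntv X s u]) ω ∂μ
        = ∫ ω, g ω * (a * fs ω + b * fu ω) ∂μ := by
      refine integral_congr_ae ?_
      filter_upwards [hhar] with ω hω
      rw [hω]
    have hgs : Integrable (g * fs) μ := integrable_mul_of_sq hgae (haesm s hs) hg2 (hsq s hs)
    have hgu : Integrable (g * fu) μ := integrable_mul_of_sq hgae (haesm u hu) hg2 (hsq u hu)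
    have h3 : ∫ ω, g ω * (a * fs ω + b * fu ω) ∂μ
        = a * ∫ ω, g ω * fs ω ∂μ + b * ∫ ω, g ω * fu ω ∂μ := by
      have : (fun ω => g ω * (a * fs ω + b * fu ω))
          = fun ω => a * (g ω * fs ω) + b * (g ω * fu ω) := by funext ω; ring
      rw [this, integral_add
        (show Integrable (fun ω => a * (g ω * fs ω)) μ from hgs.const_mul a)
        (show Integrable (fun ω => b * (g ω * fu ω)) μ from hgu.const_mul b),
        integral_const_mul, integral_const_mul]
    calc ∫ ω, g ω * ft ω ∂μ = ∫ ω, (g * ft) ω ∂μ := rfl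
      _ = _ := by rw [show (fun ω => (g * ft) ω) = fun ω => g ω * ft ω from rfl, h, h2, h3]
  have hfs2 : Integrable (fun ω => fs ω ^ 2) μ := hsq s hs
  have hfu2 : Integrable (fun ω => fu ω ^ 2) μ := hsq u hu
  have hss : ∫ ω, fs ω * fs ω ∂μ = mFun μ X M 1 s := by
    rw [show (fun ω => fs ω * fs ω) = fun ω => fs ω ^ 2 from by funext ω; ring]; rfl
  have huu : ∫ ω, fu ω * fu ω ∂μ = mFun μ X M 1 u := by
    rw [show (fun ω => fu ω * fu ω) = fun ω => fu ω ^ 2 from by funext ω; ring]; rfl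
  have hsu : ∫ ω, fs ω * fu ω ∂μ = mFun μ X M 1 s := key s u hs (hst.trans htu)
  have hus : ∫ ω, fu ω * fs ω ∂μ = mFun μ X M 1 s := by
    rw [show (fun ω => fu ω * fs ω) = fun ω => fs ω * fu ω from by funext ω; ring, hsu]
  have hstm : ∫ ω, fs ω * ft ω ∂μ = mFun μ X M 1 s := key s t hs hst
  have hut : ∫ ω, fu ω * ft ω ∂μ = mFun μ X M 1 t := by
    rw [show (fun ω => fu ω * ft ω) = fun ω => ft ω * fu ω from by funext ω; ring]
    exact key t u ht htu
  have eq1 : mFun μ X M 1 s = a * mFun μ X M 1 s + b * mFun μ X M 1 s := by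
    have := harness fs hmeasIntv_s (haesm s hs) hfs2
    rw [hstm, hss, hsu] at this; exact this
  have eq2 : mFun μ X M 1 t = a * mFun μ X M 1 s + b * mFun μ X M 1 u := by
    have := harness fu hmeasIntv_u (haesm u hu) hfu2
    rw [hut, hus, huu] at this; exact this
  have hspos := hpos s hs
  have hab : a + b = 1 := by
    have h : (a + b) * mFun μ X M 1 s = 1 * mFun μ X M 1 s := by linarith
    exact mul_right_cancel₀ (ne_of_gt hspos) h
  have hsu_lt : mFun μ X M 1 s < mFun μ X M 1 u := hmono hs hu (hst.trans htu)
  have hst_lt : mFun μ X M 1 s < mFun μ X M 1 t := hmono hs ht hst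
  have hden : mFun μ X M 1 u - mFun μ X M 1 s ≠ 0 := by linarith
  have hb : b = (mFun μ X M 1 t - mFun μ X M 1 s) / (mFun μ X M 1 u - mFun μ X M 1 s) := by
    have ha' : a = 1 - b := by linarith
    rw [ha'] at eq2
    field_simp
    linarith
  refine ⟨?_, hb, hab⟩
  rw [eq_div_iff hden]
  have : b * (mFun μ X M 1 u - mFun μ X M 1 s) = mFun μ X M 1 t - mFun μ X M 1 s := by
    rw [hb]; field_simp
  nlinarith [this, hab]
end
end

section
/- Let m : (0,∞) → ℝ be strictly increasing with m(s) → 0 as s → 0+, and let h : (0,∞) → ℝ satisfy h(s) → 0 as s → 0+ and, for all 0 < s < t < u, h(t) − h(s) = ((m(t) − m(s))/(m(u) − m(s)))·(h(u) − h(s)). Then there exists a constant β ∈ ℝ such that h(t) = β·m(t) for all t > 0. -/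
open Filter

/-- If `m` is strictly increasing on `(0,∞)` with `m(s) → 0` as `s → 0+`,
`h(s) → 0` as `s → 0+`, and `h(t) - h(s) = ((m(t)-m(s))/(m(u)-m(s)))·(h(u)-h(s))`
for all `0 < s < t < u`, then `h = β·m` for some constant `β`. -/
theorem proportional_of_harness_relation
    (m h : ℝ → ℝ)
    (hm : StrictMonoOn m (Set.Ioi 0))
    (hm0 : Tendsto m (nhdsWithin 0 (Set.Ioi 0)) (nhds 0))
    (hh0 : Tendsto h (nhdsWithin 0 (Set.Ioi 0)) (nhds 0))
    (hrel : ∀ s t u : ℝ, 0 < s → s < t → t < u →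
      h t - h s = ((m t - m s) / (m u - m s)) * (h u - h s)) :
    ∃ β : ℝ, ∀ t : ℝ, 0 < t → h t = β * m t := by
  have mpos : ∀ u : ℝ, 0 < u → 0 < m u := by
    intro u hu
    by_contra hle
    push_neg at hle
    have h2 : m (u / 2) < m u :=
      hm (Set.mem_Ioi.2 (half_pos hu)) (Set.mem_Ioi.2 hu) (half_lt_self hu)
    have hneg : m (u / 2) < 0 := h2.trans_le hle
    have hev : ∀ᶠ s in nhdsWithin 0 (Set.Ioi 0), m (u / 2) < m s :=
      hm0.eventually_const_lt hneg
    have hmem : Set.Ioo 0 (u / 2) ∈ nhdsWithin 0 (Set.Ioi 0) :=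
      Ioo_mem_nhdsGT_of_mem ⟨le_refl 0, half_pos hu⟩
    obtain ⟨s, hs1, hs2⟩ := (hev.and (Filter.eventually_mem_set.2 hmem)).exists
    exact absurd hs1 (not_lt.2 (hm (Set.mem_Ioi.2 hs2.1) (Set.mem_Ioi.2 (half_pos hu)) hs2.2).le)
  have key : ∀ t u : ℝ, 0 < t → t < u → h t = (m t / m u) * h u := by
    intro t u ht htu
    have hu : 0 < u := ht.trans htu
    have hmu : m u ≠ 0 := (mpos u hu).ne'
    have L1 : Tendsto (fun s => h t - h s) (nhdsWithin 0 (Set.Ioi 0)) (nhds (h t)) := by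
      simpa using hh0.const_sub (h t)
    have L2 : Tendsto (fun s => ((m t - m s) / (m u - m s)) * (h u - h s))
        (nhdsWithin 0 (Set.Ioi 0)) (nhds ((m t / m u) * h u)) := by
      have := ((hm0.const_sub (m t)).div (hm0.const_sub (m u))
        (by simpa using hmu)).mul (hh0.const_sub (h u))
      simpa using this
    have heq : (fun s => h t - h s) =ᶠ[nhdsWithin 0 (Set.Ioi 0)]
        fun s => ((m t - m s) / (m u - m s)) * (h u - h s) := by
      filter_upwards [Ioo_mem_nhdsGT_of_mem ⟨le_refl 0, ht⟩] with s hs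
      exact hrel s t u hs.1 hs.2 htu
    exact tendsto_nhds_unique (L1.congr' heq) L2
  refine ⟨h 1 / m 1, fun t ht => ?_⟩
  set u : ℝ := max t 1 + 1 with hudef
  have hu1 : (1 : ℝ) < u := lt_of_le_of_lt (le_max_right t 1) (lt_add_one _)
  have htu : t < u := lt_of_le_of_lt (le_max_left t 1) (lt_add_one _)
  have hmu : m u ≠ 0 := (mpos u (lt_trans one_pos hu1)).ne'
  have hm1 : m 1 ≠ 0 := (mpos 1 one_pos).ne'
  rw [key t u ht htu, key 1 u one_pos hu1]
  field_simp
end
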